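/- arXiv:2511.02733 — 3 statements merged into one kernel-verified Lean document; each statement's English description precedes it below -/
import Mathlib

section
/- Let d be an odd integer with d ≥ 3 and set N = (d-1)/2. For every integer m with 0 ≤ m ≤ N there exists a finite sequence of nonnegative integers (n₁,…,n_s) with s ≤ ⌈log₂ N⌉ + 1 such that m = φ(d; n₁,…,n_s), where φ(d; n₁) = ⌊(d-1)/2^{n₁}⌋ and φ(d; n₁,…,n_{t+1}) = ⌊(d-1-φ(d; n₁,…,n_t))/2^{n_{t+1}}⌋. -/
/-!
Write `e = d - 1` and `N = e / 2`. The values `e / 2 ^ n` of `φ` on one exponent meet every interval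
`[u, v]` with `u ≤ N` and either `2 u ≤ v` (halving cannot jump over it) or `N ≤ v` (it contains
`e / 2`). Otherwise go one step back: the `a` with `(e - a) / 2 ^ n ∈ [u, v]` form an interval of
length `2 ^ n (v - u + 1)`, and for the least `n` with `e - N < 2 ^ n (v + 1)` it still starts at
most at `N`. So each step back at least doubles the length, and starting from `[m, m]` at most
`⌈log₂ N⌉` steps reach an interval of length `N`, which falls under the first case.
-/

/-- The function `φ(d; n₁,…,n_t)` of Definition 4.6. -/
def phi (d : ℕ) (ns : List ℕ) : ℕ :=
  ns.foldl (fun acc n => (d - 1 - acc) / 2 ^ n) 0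

theorem exists_div_two_pow_mem_Icc {e u v : ℕ} (hue : u ≤ e) (huv : 2 * u ≤ v) :
    ∃ j, e / 2 ^ j ∈ Set.Icc u v := by
  have hex : ∃ j, e / 2 ^ j ≤ v := ⟨e, by rw [Nat.div_eq_of_lt e.lt_two_pow_self]; omega⟩
  refine ⟨Nat.find hex, ?_, Nat.find_spec hex⟩
  rcases hj : Nat.find hex with _ | j
  · simpa using hue
  · have hprev : v < e / 2 ^ j := not_le.mp (Nat.find_min hex (by omega))
    rw [pow_succ, ← Nat.div_div_eq_div_mul]
    omega

theorem exists_two_pow_mul_le_lt {a M : ℕ} (ha : 0 < a) (haM : a ≤ M) :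
    ∃ k, 2 ^ k * a ≤ M ∧ M < 2 ^ (k + 1) * a := by
  refine ⟨Nat.log 2 (M / a), ?_, ?_⟩
  · rw [← Nat.le_div_iff_mul_le ha]
    exact Nat.pow_log_le_self 2 (Nat.div_pos haM ha).ne'
  · rw [← Nat.div_lt_iff_lt_mul ha]
    exact Nat.lt_pow_succ_log_self (by norm_num) _

theorem sub_div_mem_Icc_of_mem_Icc {e a P u v : ℕ} (hP : 0 < P) (hPu : P * u ≤ e)
    (ha : a ∈ Set.Icc (e + 1 - P * (v + 1)) (e - P * u)) : (e - a) / P ∈ Set.Icc u v := by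
  obtain ⟨h₁, h₂⟩ := ha
  constructor
  · rw [Nat.le_div_iff_mul_le hP, mul_comm]
    omega
  · rw [← Nat.lt_add_one_iff, Nat.div_lt_iff_lt_mul hP, mul_comm]
    omega

theorem exists_two_pow_preimage_Icc {e u v : ℕ} (huv : u ≤ v) (hv : v < e / 2) :
    ∃ n u' v', u' ≤ v' ∧ u' ≤ e / 2 ∧ 2 * (v - u + 1) ≤ v' - u' + 1 ∧
      ∀ a ∈ Set.Icc u' v', (e - a) / 2 ^ n ∈ Set.Icc u v := by
  obtain ⟨k, hle, hlt⟩ :=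
    exists_two_pow_mul_le_lt (a := v + 1) (M := e - e / 2) (by omega) (by omega)
  have hdouble : 2 ^ (k + 1) * (v + 1) = 2 * (2 ^ k * (v + 1)) := by ring
  have hsplit : 2 ^ (k + 1) * u + 2 ^ (k + 1) * (v - u + 1) = 2 ^ (k + 1) * (v + 1) := by
    rw [← mul_add]
    congr 1
    omega
  have hgrow : 2 * (v - u + 1) ≤ 2 ^ (k + 1) * (v - u + 1) :=
    Nat.mul_le_mul_right _ (Nat.le_self_pow k.succ_ne_zero 2)
  exact ⟨k + 1, e + 1 - 2 ^ (k + 1) * (v + 1), e - 2 ^ (k + 1) * u, by omega, by omega, by omega,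
    fun a ha => sub_div_mem_Icc_of_mem_Icc (by positivity) (by omega) ha⟩

@[simp]
theorem phi_singleton (d n : ℕ) : phi d [n] = (d - 1) / 2 ^ n := rfl

theorem phi_append_singleton (d n : ℕ) (ns : List ℕ) :
    phi d (ns ++ [n]) = (d - 1 - phi d ns) / 2 ^ n := by
  simp [phi]

theorem exists_phi_singleton_mem_Icc {d u v : ℕ} (hu : u ≤ (d - 1) / 2)
    (h : 2 * u ≤ v ∨ (d - 1) / 2 ≤ v) : ∃ n, phi d [n] ∈ Set.Icc u v := by
  rcases h with h | h
  · simpa using exists_div_two_pow_mem_Icc (e := d - 1) (by omega) h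
  · exact ⟨1, by simpa using ⟨hu, h⟩⟩

theorem exists_phi_mem_Icc (d t : ℕ) {u v : ℕ} (huv : u ≤ v) (hu : u ≤ (d - 1) / 2)
    (hlen : (d - 1) / 2 ≤ 2 ^ t * (v - u + 1)) :
    ∃ ns, ns ≠ [] ∧ ns.length ≤ t + 1 ∧ phi d ns ∈ Set.Icc u v := by
  induction t generalizing u v with
  | zero =>
    rw [pow_zero, one_mul] at hlen
    obtain ⟨n, hn⟩ := exists_phi_singleton_mem_Icc (v := v) hu (by omega)
    exact ⟨[n], by simp, by simp, hn⟩
  | succ t ih =>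
    by_cases hbase : 2 * u ≤ v ∨ (d - 1) / 2 ≤ v
    · obtain ⟨n, hn⟩ := exists_phi_singleton_mem_Icc hu hbase
      exact ⟨[n], by simp, by simp, hn⟩
    obtain ⟨n, u', v', huv', hu', hgrow, hpre⟩ :=
      exists_two_pow_preimage_Icc (e := d - 1) huv (by omega)
    have hlen' : (d - 1) / 2 ≤ 2 ^ t * (v' - u' + 1) :=
      calc (d - 1) / 2 ≤ 2 ^ (t + 1) * (v - u + 1) := hlen
        _ = 2 ^ t * (2 * (v - u + 1)) := by ring
        _ ≤ 2 ^ t * (v' - u' + 1) := by gcongr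
    obtain ⟨ns, -, hns, hmem⟩ := ih huv' hu' hlen'
    refine ⟨ns ++ [n], by simp, by simpa using hns, ?_⟩
    rw [phi_append_singleton]
    exact hpre _ hmem

theorem stmt1_general (d : ℕ) (m : ℕ) (hm : m ≤ (d - 1) / 2) :
    ∃ ns : List ℕ, ns ≠ [] ∧ ns.length ≤ Nat.clog 2 ((d - 1) / 2) + 1 ∧ m = phi d ns := by
  have hlen : (d - 1) / 2 ≤ 2 ^ Nat.clog 2 ((d - 1) / 2) * (m - m + 1) := by
    simpa using Nat.le_pow_clog one_lt_two _
  obtain ⟨ns, hne, hns, hmem⟩ := exists_phi_mem_Icc d _ le_rfl hm hlen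
  exact ⟨ns, hne, hns, (Set.mem_Icc.mp hmem).1.antisymm (Set.mem_Icc.mp hmem).2⟩

theorem stmt1 (d : ℕ) (hd : Odd d) (h3 : 3 ≤ d) (m : ℕ) (hm : m ≤ (d - 1) / 2) :
    ∃ ns : List ℕ, ns ≠ [] ∧ ns.length ≤ Nat.clog 2 ((d - 1) / 2) + 1 ∧ m = phi d ns :=
  stmt1_general d m hm
end

section
/- Let k be a field and let M be an (n+1)-dimensional k-vector space with basis β, e₁, …, e_n (n ≥ 1). Let V : M → M be the additive semilinear map determined by V(e_i) = e_{i/2} for even i, V(e_1) = β, V(e_i) = 0 for odd i > 1, and V(β) = 0. Then for every integer r with 0 ≤ r ≤ ⌊log₂ n⌋ + 1, V^r(M) is spanned by β, e₁, …, e_{⌊n/2^r⌋} (so has dimension ⌊n/2^r⌋ + 1), and V^r(M) = 0 for r > ⌊log₂ n⌋ + 2. -/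
/-!
`V` halves indices: it sends `e (2 * j)` to `e j` and `e 1` to `β`, and kills `β` and the other
odd-indexed vectors. Hence for `m ≥ 1` it maps `span {β, e 1, …, e m}` onto
`span {β, e 1, …, e (m / 2)}`, and iterating from `M = span {β, e 1, …, e n}` gives
`V^r M = span {β, e 1, …, e (n / 2^r)}` for as long as `n / 2^(r-1) ≥ 1`, i.e. `r ≤ log₂ n + 1`.
At `r = log₂ n + 1` this is `span {β}`, which the next application of `V` kills.
-/

open Submodule Set

section IterateImage

variable {R M : Type*} [Semiring R] [AddCommMonoid M] [Module R M] {σ : R →+* R}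

lemma Submodule.span_iterate_image_univ_succ [RingHomSurjective σ] (f : M →ₛₗ[σ] M) (r : ℕ) :
    span R (f^[r + 1] '' univ) = (span R (f^[r] '' univ)).map f := by
  rw [Function.iterate_succ', image_comp, ← map_span]

lemma Submodule.span_iterate_image_univ_antitone (f : M →ₛₗ[σ] M) {r s : ℕ} (hrs : r ≤ s) :
    span R (f^[s] '' univ) ≤ span R (f^[r] '' univ) := by
  apply span_mono
  obtain ⟨t, rfl⟩ := Nat.exists_eq_add_of_le hrs
  simp only [image_univ, Function.iterate_add]
  exact range_comp_subset_range _ _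

end IterateImage

section HalvingOperator

variable {R M : Type*} [Semiring R] [AddCommMonoid M] [Module R M] {σ : R →+* R}
  [RingHomSurjective σ] {V : M →ₛₗ[σ] M} {β : M} {e : ℕ → M} {n : ℕ}

lemma map_span_insert_image_Icc_eq_half (hVβ : V β = 0) (hV1 : V (e 1) = β)
    (hVeven : ∀ i, 2 ≤ i → i ≤ n → Even i → V (e i) = e (i / 2))
    (hVodd : ∀ i, 2 ≤ i → i ≤ n → Odd i → V (e i) = 0) {m : ℕ} (hm : 1 ≤ m) (hmn : m ≤ n) :
    (span R (insert β (e '' Icc 1 m))).map V = span R (insert β (e '' Icc 1 (m / 2))) := by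
  rw [map_span]
  apply le_antisymm
  · rw [span_le]
    rintro _ ⟨_, rfl | ⟨i, ⟨hi1, him⟩, rfl⟩, rfl⟩
    · simp [hVβ]
    obtain rfl | hi2 := hi1.eq_or_lt
    · exact hV1 ▸ subset_span (mem_insert _ _)
    rcases Nat.even_or_odd i with heven | hodd
    · rw [hVeven i hi2 (him.trans hmn) heven]
      exact subset_span (Or.inr ⟨i / 2, ⟨by omega, Nat.div_le_div_right him⟩, rfl⟩)
    · simp [hVodd i hi2 (him.trans hmn) hodd]
  · rw [span_le]
    rintro _ (rfl | ⟨j, ⟨hj1, hjm⟩, rfl⟩)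
    · exact subset_span ⟨e 1, Or.inr ⟨1, ⟨le_rfl, hm⟩, rfl⟩, hV1⟩
    · have hVe : V (e (2 * j)) = e j := by
        rw [hVeven (2 * j) (by omega) (by omega) (even_two_mul j), Nat.mul_div_cancel_left j two_pos]
      exact subset_span ⟨e (2 * j), Or.inr ⟨2 * j, ⟨by omega, by omega⟩, rfl⟩, hVe⟩

lemma span_iterate_image_univ_eq_span_insert_image_Icc (hn : 1 ≤ n)
    (hspan : span R (insert β (e '' Icc 1 n)) = ⊤) (hVβ : V β = 0) (hV1 : V (e 1) = β)
    (hVeven : ∀ i, 2 ≤ i → i ≤ n → Even i → V (e i) = e (i / 2))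
    (hVodd : ∀ i, 2 ≤ i → i ≤ n → Odd i → V (e i) = 0) {r : ℕ} (hr : r ≤ Nat.log 2 n + 1) :
    span R (V^[r] '' univ) = span R (insert β (e '' Icc 1 (n / 2 ^ r))) := by
  induction r with
  | zero => simpa using hspan.symm
  | succ r ih =>
    have hpow : 2 ^ r ≤ n :=
      (Nat.pow_le_pow_right two_pos (by omega)).trans (Nat.pow_log_le_self 2 (by omega))
    rw [span_iterate_image_univ_succ, ih (by omega),
      map_span_insert_image_Icc_eq_half hVβ hV1 hVeven hVodd
        ((Nat.one_le_div_iff (by positivity)).2 hpow) (Nat.div_le_self _ _),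
      Nat.div_div_eq_div_mul, ← pow_succ]

lemma span_iterate_image_univ_eq_bot (hn : 1 ≤ n)
    (hspan : span R (insert β (e '' Icc 1 n)) = ⊤) (hVβ : V β = 0) (hV1 : V (e 1) = β)
    (hVeven : ∀ i, 2 ≤ i → i ≤ n → Even i → V (e i) = e (i / 2))
    (hVodd : ∀ i, 2 ≤ i → i ≤ n → Odd i → V (e i) = 0) {r : ℕ} (hr : Nat.log 2 n + 2 ≤ r) :
    span R (V^[r] '' univ) = ⊥ := by
  have hlast : n / 2 ^ (Nat.log 2 n + 1) = 0 :=
    Nat.div_eq_of_lt (Nat.lt_pow_succ_log_self one_lt_two n)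
  refine eq_bot_iff.2 ((span_iterate_image_univ_antitone V hr).trans (le_of_eq ?_))
  rw [span_iterate_image_univ_succ,
    span_iterate_image_univ_eq_span_insert_image_Icc hn hspan hVβ hV1 hVeven hVodd le_rfl, hlast]
  simp [map_span, hVβ]

end HalvingOperator

lemma finrank_span_insert_image_Icc {K M : Type*} [DivisionRing K] [AddCommGroup M] [Module K M]
    {β : M} {e : ℕ → M} {n : ℕ}
    (hind : LinearIndependent K (fun i : Fin (n + 1) => if i.val = 0 then β else e i.val))
    {m : ℕ} (hmn : m ≤ n) :
    Module.finrank K (span K (insert β (e '' Icc 1 m))) = m + 1 := by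
  have hrange : range (fun i : Fin (m + 1) => if i.val = 0 then β else e i.val)
      = insert β (e '' Icc 1 m) := by
    ext x
    constructor
    · rintro ⟨i, rfl⟩
      by_cases hi : i.val = 0
      · simp [hi]
      · exact Or.inr ⟨i.val, ⟨by omega, by omega⟩, by simp [hi]⟩
    · rintro (rfl | ⟨j, ⟨hj1, hjm⟩, rfl⟩)
      · exact ⟨0, by simp⟩
      · exact ⟨⟨j, by omega⟩, by simp [show j ≠ 0 by omega]⟩
  have hind_m : LinearIndependent K (fun i : Fin (m + 1) => if i.val = 0 then β else e i.val) :=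
    hind.comp _ (Fin.castLE_injective (by omega))
  rw [← hrange, finrank_span_eq_card hind_m, Fintype.card_fin]

theorem stmt7 (k : Type*) [Field k] (M : Type*) [AddCommGroup M] [Module k M]
    (n : ℕ) (hn : 1 ≤ n) (σ : k ≃+* k)
    (V : M →ₛₗ[(σ : k →+* k)] M)
    (β : M) (e : ℕ → M)
    (hind : LinearIndependent k (fun i : Fin (n + 1) => if i.val = 0 then β else e i.val))
    (hspan : Submodule.span k (insert β (e '' Set.Icc 1 n)) = ⊤)
    (hVβ : V β = 0) (hV1 : V (e 1) = β)
    (hVeven : ∀ i, 2 ≤ i → i ≤ n → Even i → V (e i) = e (i / 2))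
    (hVodd : ∀ i, 2 ≤ i → i ≤ n → Odd i → V (e i) = 0) :
    (∀ r ≤ Nat.log 2 n + 1,
        Submodule.span k ((⇑V)^[r] '' Set.univ)
          = Submodule.span k (insert β (e '' Set.Icc 1 (n / 2 ^ r))) ∧
        Module.finrank k (Submodule.span k ((⇑V)^[r] '' Set.univ)) = n / 2 ^ r + 1) ∧
    (∀ r, Nat.log 2 n + 2 < r → Submodule.span k ((⇑V)^[r] '' Set.univ) = ⊥) := by
  refine ⟨fun r hr => ?_, fun r hr =>
    span_iterate_image_univ_eq_bot hn hspan hVβ hV1 hVeven hVodd hr.le⟩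
  have hspan_r := span_iterate_image_univ_eq_span_insert_image_Icc hn hspan hVβ hV1 hVeven hVodd hr
  exact ⟨hspan_r, hspan_r ▸ finrank_span_insert_image_Icc hind (Nat.div_le_self _ _)⟩
end

section
/- Let k be a perfect field of characteristic p, σ the p-power Frobenius of k, and M a finite-dimensional k-vector space equipped with a σ-semilinear endomorphism F and a σ^{-1}-semilinear endomorphism V satisfying F∘V = V∘F = 0. Then M decomposes as a direct sum M = U ⊕ Z ⊕ L of subspaces stable under both F and V, such that V is bijective on U and F is zero on U, F is bijective on Z and V is zero on Z, and both F and V are nilpotent on L. -/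
/-!
Fitting's lemma survives for semilinear endomorphisms whose twist `σ` is surjective, since kernels
and images of iterates are still subspaces: for large `N`, `M = ker F^N ⊕ im F^N` with `F`
bijective on `im F^N`, and likewise for `V`. As `V ∘ F = 0 = F ∘ V`, `V` kills `im F^N` and `F`
kills `im V^N`; in particular `im F^N ⊆ ker V^N`, which splits as
`im F^N ⊕ (ker F^N ∩ ker V^N)`. Hence `M = im V^N ⊕ im F^N ⊕ (ker F^N ∩ ker V^N)`.
-/

open Filter Function

instance RingHomSurjective.pow {R : Type*} [Semiring R] (σ : R →+* R) [RingHomSurjective σ]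
    (n : ℕ) : RingHomSurjective (σ ^ n) :=
  ⟨σ.surjective.iterate n⟩

namespace LinearMap

section Semiring

variable {R M : Type*} [Semiring R] [AddCommMonoid M] [Module R M] {σ : R →+* R} (f : M →ₛₗ[σ] M)

def iterate (n : ℕ) : M →ₛₗ[σ ^ n] M where
  toFun := f^[n]
  map_add' := iterate_map_add f n
  map_smul' c x := by
    induction n generalizing c x with
    | zero => rfl
    | succ n ih => simp only [iterate_succ_apply, map_smulₛₗ, ih]; rfl

@[simp]
theorem coe_iterate (n : ℕ) : ⇑(f.iterate n) = f^[n] := rfl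

theorem ker_iterate_mono : Monotone fun n => ker (f.iterate n) := by
  intro n m hnm x hx
  obtain ⟨d, rfl⟩ := Nat.exists_eq_add_of_le hnm
  change f^[n] x = 0 at hx
  change f^[n + d] x = 0
  rw [add_comm, iterate_add_apply, hx, iterate_map_zero]

theorem range_iterate_anti [RingHomSurjective σ] : Antitone fun n => range (f.iterate n) := by
  rintro n m hnm - ⟨x, rfl⟩
  obtain ⟨d, rfl⟩ := Nat.exists_eq_add_of_le hnm
  exact ⟨f^[d] x, by rw [coe_iterate, coe_iterate, iterate_add_apply]⟩

theorem eventually_ker_iterate_eq [IsNoetherian R M] :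
    ∀ᶠ n in atTop, ∀ m, n ≤ m → ker (f.iterate m) = ker (f.iterate n) := by
  obtain ⟨n₀, h⟩ := monotone_stabilizes_iff_noetherian.mpr inferInstance
    ⟨fun n => ker (f.iterate n), f.ker_iterate_mono⟩
  exact eventually_atTop.mpr ⟨n₀, fun n hn m hm => (h m (hn.trans hm)).symm.trans (h n hn)⟩

theorem eventually_range_iterate_eq [RingHomSurjective σ] [IsArtinian R M] :
    ∀ᶠ n in atTop, ∀ m, n ≤ m → range (f.iterate m) = range (f.iterate n) := by
  obtain ⟨n₀, h⟩ := IsArtinian.monotone_stabilizes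
    ⟨fun n => OrderDual.toDual (range (f.iterate n)), f.range_iterate_anti⟩
  exact eventually_atTop.mpr ⟨n₀, fun n hn m hm => (h m (hn.trans hm)).symm.trans (h n hn)⟩

theorem eventually_range_iterate_succ_eq [RingHomSurjective σ] [IsArtinian R M] :
    ∀ᶠ n in atTop, range (f.iterate (n + 1)) = range (f.iterate n) := by
  filter_upwards [f.eventually_range_iterate_eq] with n hn
  exact hn _ n.le_succ

theorem eventually_disjoint_ker_iterate_range_iterate [RingHomSurjective σ] [IsNoetherian R M] :
    ∀ᶠ n in atTop, Disjoint (ker (f.iterate n)) (range (f.iterate n)) := by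
  filter_upwards [f.eventually_ker_iterate_eq] with n hn
  rw [Submodule.disjoint_def]
  rintro - hx ⟨y, rfl⟩
  have hy : y ∈ ker (f.iterate (n + n)) := by
    rwa [mem_ker, coe_iterate, iterate_add_apply]
  rwa [hn _ (n.le_add_right n)] at hy

variable {f}

theorem mem_ker_iterate_of_apply_eq_zero {n : ℕ} (hn : n ≠ 0) {x : M} (hx : f x = 0) :
    x ∈ ker (f.iterate n) := by
  obtain ⟨m, rfl⟩ := Nat.exists_eq_succ_of_ne_zero hn
  rw [mem_ker, coe_iterate, iterate_succ_apply, hx, iterate_map_zero]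

theorem apply_mem_ker_iterate {n : ℕ} {x : M} (hx : x ∈ ker (f.iterate n)) :
    f x ∈ ker (f.iterate n) := by
  rw [mem_ker, coe_iterate, ← iterate_succ_apply, iterate_succ_apply', ← coe_iterate, hx, map_zero]

theorem exists_apply_eq_of_mem_range_iterate [RingHomSurjective σ] {n : ℕ} (hn : n ≠ 0) {x : M}
    (hx : x ∈ range (f.iterate n)) : ∃ y, f y = x := by
  obtain ⟨m, rfl⟩ := Nat.exists_eq_succ_of_ne_zero hn
  obtain ⟨y, rfl⟩ := hx
  exact ⟨f^[m] y, (iterate_succ_apply' f m y).symm⟩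

end Semiring

section Ring

variable {R M : Type*} [Ring R] [AddCommGroup M] [Module R M] {σ : R →+* R} (f : M →ₛₗ[σ] M)

theorem eventually_codisjoint_ker_iterate_range_iterate [RingHomSurjective σ] [IsArtinian R M] :
    ∀ᶠ n in atTop, Codisjoint (ker (f.iterate n)) (range (f.iterate n)) := by
  filter_upwards [f.eventually_range_iterate_eq] with n hn
  refine codisjoint_iff.mpr (Submodule.eq_top_iff'.mpr fun x => Submodule.mem_sup.mpr ?_)
  obtain ⟨y, hy⟩ : f.iterate n x ∈ range (f.iterate (n + n)) := by
    rw [hn _ (n.le_add_right n)]; exact mem_range_self _ x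
  refine ⟨x - f.iterate n y, ?_, f.iterate n y, mem_range_self _ y, sub_add_cancel x _⟩
  rw [mem_ker, map_sub, ← hy, coe_iterate, coe_iterate, iterate_add_apply, sub_self]

theorem eventually_isCompl_ker_iterate_range_iterate [RingHomSurjective σ] [IsNoetherian R M]
    [IsArtinian R M] : ∀ᶠ n in atTop, IsCompl (ker (f.iterate n)) (range (f.iterate n)) := by
  filter_upwards [f.eventually_disjoint_ker_iterate_range_iterate,
    f.eventually_codisjoint_ker_iterate_range_iterate] with n hd hc
  exact ⟨hd, hc⟩

variable {f}

theorem bijOn_range_iterate [RingHomSurjective σ] {n : ℕ} (hn : n ≠ 0)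
    (hd : Disjoint (ker (f.iterate n)) (range (f.iterate n)))
    (hs : range (f.iterate (n + 1)) = range (f.iterate n)) :
    Set.BijOn f (range (f.iterate n)) (range (f.iterate n)) := by
  have hmaps : Set.MapsTo f (range (f.iterate n)) (range (f.iterate n)) := by
    rintro - ⟨y, rfl⟩
    rw [SetLike.mem_coe, ← hs]
    exact ⟨y, iterate_succ_apply' f n y⟩
  refine ⟨hmaps, fun x hx y hy hxy => ?_, ?_⟩
  · refine sub_eq_zero.mp (Submodule.disjoint_def.mp hd _ ?_ (sub_mem hx hy))
    exact mem_ker_iterate_of_apply_eq_zero hn (by rw [map_sub, hxy, sub_self])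
  · rintro x hx
    rw [SetLike.mem_coe, ← hs] at hx
    obtain ⟨y, rfl⟩ := hx
    exact ⟨f^[n] y, ⟨y, rfl⟩, (iterate_succ_apply' f n y).symm⟩

end Ring

end LinearMap

namespace Submodule

variable {R M : Type*} [Ring R] [AddCommGroup M] [Module R M] {B U C Z : Submodule R M}

theorem exists_add_add_of_codisjoint (hBU : Codisjoint B U) (hCZ : Codisjoint C Z) (hZB : Z ≤ B)
    (x : M) : ∃ u ∈ U, ∃ z ∈ Z, ∃ l ∈ C ⊓ B, x = u + z + l := by
  obtain ⟨b, hb, u, hu, rfl⟩ := mem_sup.mp (hBU.eq_top ▸ mem_top : x ∈ B ⊔ U)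
  obtain ⟨l, hl, z, hz, rfl⟩ := mem_sup.mp (hCZ.eq_top ▸ mem_top : b ∈ C ⊔ Z)
  refine ⟨u, hu, z, hz, l, ⟨hl, ?_⟩, by abel⟩
  simpa using sub_mem hb (hZB hz)

theorem eq_zero_of_add_add_eq_zero_of_disjoint (hBU : Disjoint B U) (hCZ : Disjoint C Z)
    (hZB : Z ≤ B) {u z l : M} (hu : u ∈ U) (hz : z ∈ Z) (hl : l ∈ C ⊓ B) (h : u + z + l = 0) :
    u = 0 ∧ z = 0 ∧ l = 0 := by
  have hu0 : u = 0 := by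
    refine disjoint_def.mp hBU.symm u hu ?_
    rw [eq_neg_of_add_eq_zero_left ((add_assoc u z l).symm ▸ h : u + (z + l) = 0)]
    exact neg_mem (add_mem (hZB hz) hl.2)
  subst hu0
  rw [zero_add] at h
  have hz0 : z = 0 := by
    refine disjoint_def.mp hCZ.symm z hz ?_
    rw [eq_neg_of_add_eq_zero_left h]
    exact neg_mem hl.1
  subst hz0
  exact ⟨rfl, rfl, by simpa using h⟩

end Submodule

open LinearMap

theorem stmt12_general (p : ℕ) (k : Type*) [Field k] [ExpChar k p] [PerfectRing k p]
    (M : Type*) [AddCommGroup M] [Module k M] [FiniteDimensional k M]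
    (F : M →ₛₗ[frobenius k p] M)
    (V : M →ₛₗ[((frobeniusEquiv k p).symm : k →+* k)] M)
    (hFV : ∀ x, F (V x) = 0) (hVF : ∀ x, V (F x) = 0) :
    ∃ U Z L : Submodule k M,
      (∀ x : M, ∃ u ∈ U, ∃ z ∈ Z, ∃ l ∈ L, x = u + z + l) ∧
      (∀ u ∈ U, ∀ z ∈ Z, ∀ l ∈ L, u + z + l = 0 → u = 0 ∧ z = 0 ∧ l = 0) ∧
      (∀ x ∈ U, F x ∈ U ∧ V x ∈ U) ∧
      (∀ x ∈ Z, F x ∈ Z ∧ V x ∈ Z) ∧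
      (∀ x ∈ L, F x ∈ L ∧ V x ∈ L) ∧
      Set.BijOn ⇑V ↑U ↑U ∧ (∀ x ∈ U, F x = 0) ∧
      Set.BijOn ⇑F ↑Z ↑Z ∧ (∀ x ∈ Z, V x = 0) ∧
      (∃ N : ℕ, ∀ x ∈ L, (⇑F)^[N] x = 0 ∧ (⇑V)^[N] x = 0) := by
  have : RingHomSurjective (frobenius k p) := ⟨surjective_frobenius k p⟩
  obtain ⟨N, hN, hF, hFs, hV, hVs⟩ := ((eventually_ne_atTop 0).and <|
    F.eventually_isCompl_ker_iterate_range_iterate.and <| F.eventually_range_iterate_succ_eq.and <|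
    V.eventually_isCompl_ker_iterate_range_iterate.and V.eventually_range_iterate_succ_eq).exists
  have hVZ : ∀ x ∈ range (F.iterate N), V x = 0 := fun x hx => by
    obtain ⟨y, rfl⟩ := exists_apply_eq_of_mem_range_iterate hN hx
    exact hVF y
  have hFU : ∀ x ∈ range (V.iterate N), F x = 0 := fun x hx => by
    obtain ⟨y, rfl⟩ := exists_apply_eq_of_mem_range_iterate hN hx
    exact hFV y
  have hZB : range (F.iterate N) ≤ ker (V.iterate N) := fun x hx =>
    mem_ker_iterate_of_apply_eq_zero hN (hVZ x hx)
  have hVbij := bijOn_range_iterate hN hV.disjoint hVs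
  have hFbij := bijOn_range_iterate hN hF.disjoint hFs
  refine ⟨range (V.iterate N), range (F.iterate N), ker (F.iterate N) ⊓ ker (V.iterate N),
    Submodule.exists_add_add_of_codisjoint hV.codisjoint hF.codisjoint hZB,
    fun u hu z hz l hl => Submodule.eq_zero_of_add_add_eq_zero_of_disjoint hV.disjoint hF.disjoint
      hZB hu hz hl,
    fun x hx => ⟨hFU x hx ▸ zero_mem _, hVbij.mapsTo hx⟩,
    fun x hx => ⟨hFbij.mapsTo hx, hVZ x hx ▸ zero_mem _⟩,
    fun x hx => ⟨⟨apply_mem_ker_iterate hx.1, mem_ker_iterate_of_apply_eq_zero hN (hVF x)⟩,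
      ⟨mem_ker_iterate_of_apply_eq_zero hN (hFV x), apply_mem_ker_iterate hx.2⟩⟩,
    hVbij, hFU, hFbij, hVZ, N, fun x hx => ⟨hx.1, hx.2⟩⟩

theorem stmt12 (p : ℕ) [Fact p.Prime] (k : Type*) [Field k] [ExpChar k p] [PerfectRing k p]
    (M : Type*) [AddCommGroup M] [Module k M] [FiniteDimensional k M]
    (F : M →ₛₗ[frobenius k p] M)
    (V : M →ₛₗ[((frobeniusEquiv k p).symm : k →+* k)] M)
    (hFV : ∀ x, F (V x) = 0) (hVF : ∀ x, V (F x) = 0) :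
    ∃ U Z L : Submodule k M,
      (∀ x : M, ∃ u ∈ U, ∃ z ∈ Z, ∃ l ∈ L, x = u + z + l) ∧
      (∀ u ∈ U, ∀ z ∈ Z, ∀ l ∈ L, u + z + l = 0 → u = 0 ∧ z = 0 ∧ l = 0) ∧
      (∀ x ∈ U, F x ∈ U ∧ V x ∈ U) ∧
      (∀ x ∈ Z, F x ∈ Z ∧ V x ∈ Z) ∧
      (∀ x ∈ L, F x ∈ L ∧ V x ∈ L) ∧
      Set.BijOn ⇑V ↑U ↑U ∧ (∀ x ∈ U, F x = 0) ∧
      Set.BijOn ⇑F ↑Z ↑Z ∧ (∀ x ∈ Z, V x = 0) ∧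
      (∃ N : ℕ, ∀ x ∈ L, (⇑F)^[N] x = 0 ∧ (⇑V)^[N] x = 0) :=
  stmt12_general p k M F V hFV hVF
end
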